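/- arXiv:1702.05795 — 7 statements merged into one kernel-verified Lean document; each statement's English description precedes it below -/
import Mathlib

section
/- The complex algebra of an intuitionistic layered frame, consisting of all upward-closed subsets with intersection, union, the Heyting implication A ⇒ B = {x | ∀ x' ≽ x: x' ∈ A → x' ∈ B}, top X, bottom ∅, and the relational operations ▸_R, -▸_R, ▸-_R, forms a layered Heyting algebra. -/
/-- A subset of a preorder is upward closed. -/
def UpClosed {α : Type*} [Preorder α] (A : Set α) : Prop :=
  ∀ ⦃a b : α⦄, a ∈ A → a ≤ b → b ∈ A

/-- `A ▸_R B`. -/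
def layR {α : Type*} [Preorder α] (R : α → α → α → Prop) (A B : Set α) : Set α :=
  {x | ∃ w y z, w ≤ x ∧ R y z w ∧ y ∈ A ∧ z ∈ B}

/-- `A -▸_R B`. -/
def limpR {α : Type*} [Preorder α] (R : α → α → α → Prop) (A B : Set α) : Set α :=
  {x | ∀ w y z, x ≤ w → R w y z → y ∈ A → z ∈ B}

/-- `A ▸-_R B`. -/
def rimpR {α : Type*} [Preorder α] (R : α → α → α → Prop) (A B : Set α) : Set α :=
  {x | ∀ w y z, x ≤ w → R y w z → y ∈ A → z ∈ B}

/-- Heyting implication on upward-closed sets: `A ⇒ B`. -/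
def himpR {α : Type*} [Preorder α] (A B : Set α) : Set α :=
  {x | ∀ x', x ≤ x' → x' ∈ A → x' ∈ B}

/-- The complex algebra of an intuitionistic layered frame is a layered
Heyting algebra: the upward-closed sets are closed under all the operations,
the Heyting adjunction holds for `⇒`, and the residuation law holds for
`▸_R`, `-▸_R`, `▸-_R`. -/
theorem complexAlgebra_layeredHeyting {α : Type*} [Preorder α] (R : α → α → α → Prop) :
    UpClosed (Set.univ : Set α) ∧ UpClosed (∅ : Set α) ∧
    (∀ A B : Set α, UpClosed A → UpClosed B → UpClosed (A ∩ B)) ∧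
    (∀ A B : Set α, UpClosed A → UpClosed B → UpClosed (A ∪ B)) ∧
    (∀ A B : Set α, UpClosed A → UpClosed B → UpClosed (himpR A B)) ∧
    (∀ A B : Set α, UpClosed A → UpClosed B → UpClosed (layR R A B)) ∧
    (∀ A B : Set α, UpClosed A → UpClosed B → UpClosed (limpR R A B)) ∧
    (∀ A B : Set α, UpClosed A → UpClosed B → UpClosed (rimpR R A B)) ∧
    (∀ A B C : Set α, UpClosed A → UpClosed B → UpClosed C →
      (C ⊆ himpR A B ↔ C ∩ A ⊆ B)) ∧
    (∀ A B C : Set α, UpClosed A → UpClosed B → UpClosed C →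
      (layR R A B ⊆ C ↔ A ⊆ limpR R B C)) ∧
    (∀ A B C : Set α, UpClosed A → UpClosed B → UpClosed C →
      (layR R A B ⊆ C ↔ B ⊆ rimpR R A C)) := by
  refine ⟨fun _ _ _ _ => trivial, fun _ _ h _ => h.elim,
    fun A B hA hB a b ha le => ⟨hA ha.1 le, hB ha.2 le⟩,
    fun A B hA hB a b ha le => ha.elim (fun h => Or.inl (hA h le)) (fun h => Or.inr (hB h le)),
    fun A B _ _ a b ha le x' lx hx => ha x' (le.trans lx) hx,
    fun A B _ _ a b ha le => ?_,
    fun A B _ _ a b ha le w y z lw => ha w y z (le_trans le lw),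
    fun A B _ _ a b ha le w y z lw => ha w y z (le_trans le lw),
    fun A B C hA hB hC => ?_, fun A B C hA hB hC => ?_, fun A B C hA hB hC => ?_⟩
  · obtain ⟨w, y, z, lw, hr, hy, hz⟩ := ha
    exact ⟨w, y, z, lw.trans le, hr, hy, hz⟩
  · constructor
    · rintro h x ⟨hxC, hxA⟩
      exact h hxC x le_rfl hxA
    · intro h x hxC x' lx hx'
      exact h ⟨hC hxC lx, hx'⟩
  · constructor
    · intro h a haA w y z law hr hyB
      exact h ⟨z, w, y, le_rfl, hr, hA haA law, hyB⟩
    · rintro h x ⟨w, y, z, lw, hr, hyA, hzB⟩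
      exact hC (h hyA y z w le_rfl hr hzB) lw
  · constructor
    · intro h b hbB w y z lbw hr hyA
      exact h ⟨z, y, w, le_rfl, hr, hyA, hB hbB lbw⟩
    · rintro h x ⟨w, y, z, lw, hr, hyA, hzB⟩
      exact hC (h hzB z y w le_rfl hr hyA) lw
end

section
/- Let 𝔸 be a layered Heyting algebra and define the relation R on prime filters by R F₀ F₁ F₂ iff for all a ∈ F₀ and b ∈ F₁, a ▸ b ∈ F₂. Then R F₀ F₁ F₂ holds iff for all a, b: a ∈ F₁ and b ∉ F₂ implies a -▸ b ∉ F₀. -/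
/-- A layered Heyting algebra: a Heyting algebra equipped with binary operations
`lay` (▸), `limp` (-▸) and `rimp` (▸-) satisfying the residuation law
`a ▸ b ≤ c ↔ a ≤ b -▸ c ↔ b ≤ a ▸- c`. -/
class LayeredHeytingAlgebra (A : Type*) extends HeytingAlgebra A where
  lay : A → A → A
  limp : A → A → A
  rimp : A → A → A
  lay_le_iff_limp : ∀ a b c : A, lay a b ≤ c ↔ a ≤ limp b c
  lay_le_iff_rimp : ∀ a b c : A, lay a b ≤ c ↔ b ≤ rimp a c

open LayeredHeytingAlgebra

/-- A prime filter of the underlying lattice of a layered Heyting algebra. -/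
def IsPrimeFilter {A : Type*} [LayeredHeytingAlgebra A] (F : Set A) : Prop :=
  F.Nonempty ∧ (∀ ⦃a b : A⦄, a ∈ F → a ≤ b → b ∈ F) ∧
    (∀ ⦃a b : A⦄, a ∈ F → b ∈ F → a ⊓ b ∈ F) ∧ (⊥ : A) ∉ F ∧
    ∀ a b : A, a ⊔ b ∈ F → a ∈ F ∨ b ∈ F

theorem primeFilter_rel_characterization {A : Type*} [LayeredHeytingAlgebra A]
    {F₀ F₁ F₂ : Set A} (h₀ : IsPrimeFilter F₀) (h₁ : IsPrimeFilter F₁)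
    (h₂ : IsPrimeFilter F₂) :
    (∀ a ∈ F₀, ∀ b ∈ F₁, lay a b ∈ F₂) ↔
      (∀ a b : A, a ∈ F₁ → b ∉ F₂ → limp a b ∉ F₀) := by
  constructor
  · intro h a b ha hb hlimp
    exact hb (h₂.2.1 (h _ hlimp _ ha) ((lay_le_iff_limp _ _ _).2 le_rfl))
  · intro h a ha b hb
    by_contra hc
    exact h b (lay a b) hb hc (h₀.2.1 ha ((lay_le_iff_limp _ _ _).1 le_rfl))
end

section
/- Every layered Heyting algebra 𝔸 embeds into the complex algebra of its prime filter frame: the map h(a) = {F ∈ Pr(𝔸) | a ∈ F} is an injective homomorphism of layered Heyting algebras into the algebra of upward-closed (under inclusion) sets of prime filters with the relational operations induced by R F₀ F₁ F₂ iff ∀ a ∈ F₀, b ∈ F₁: a ▸ b ∈ F₂. -/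
open LayeredHeytingAlgebra

/-- The set of prime filters of `A`. -/
def PF (A : Type*) [LayeredHeytingAlgebra A] : Type _ :=
  {F : Set A // IsPrimeFilter F}

/-- The ternary relation on prime filters. -/
def Rpf {A : Type*} [LayeredHeytingAlgebra A] (F₀ F₁ F₂ : PF A) : Prop :=
  ∀ a ∈ F₀.val, ∀ b ∈ F₁.val, lay a b ∈ F₂.val

/-- The representation map `h(a) = {F | a ∈ F}`. -/
def hrep {A : Type*} [LayeredHeytingAlgebra A] (a : A) : Set (PF A) :=
  {F : PF A | a ∈ F.val}

/-- Upward closure (w.r.t. inclusion of prime filters) of a set of prime filters. -/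
def UpC {A : Type*} [LayeredHeytingAlgebra A] (S : Set (PF A)) : Prop :=
  ∀ F G : PF A, F ∈ S → F.val ⊆ G.val → G ∈ S

/-- Heyting implication of upward-closed sets of prime filters. -/
def himpP {A : Type*} [LayeredHeytingAlgebra A] (S T : Set (PF A)) : Set (PF A) :=
  {F : PF A | ∀ G : PF A, F.val ⊆ G.val → G ∈ S → G ∈ T}

/-- `S ▸_R T` on sets of prime filters. -/
def layP {A : Type*} [LayeredHeytingAlgebra A] (S T : Set (PF A)) : Set (PF A) :=
  {F : PF A | ∃ W G H : PF A, W.val ⊆ F.val ∧ Rpf G H W ∧ G ∈ S ∧ H ∈ T}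

/-- `S -▸_R T` on sets of prime filters. -/
def limpP {A : Type*} [LayeredHeytingAlgebra A] (S T : Set (PF A)) : Set (PF A) :=
  {F : PF A | ∀ W G H : PF A, F.val ⊆ W.val → Rpf W G H → G ∈ S → H ∈ T}

/-- `S ▸-_R T` on sets of prime filters. -/
def rimpP {A : Type*} [LayeredHeytingAlgebra A] (S T : Set (PF A)) : Set (PF A) :=
  {F : PF A | ∀ W G H : PF A, F.val ⊆ W.val → Rpf G W H → G ∈ S → H ∈ T}

section Aux

variable {A : Type*} [LayeredHeytingAlgebra A]

lemma lay_mono_left {x y : A} (h : x ≤ y) (b : A) : lay x b ≤ lay y b := by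
  rw [lay_le_iff_limp]
  exact h.trans ((lay_le_iff_limp y b (lay y b)).1 le_rfl)

lemma lay_mono_right (a : A) {x y : A} (h : x ≤ y) : lay a x ≤ lay a y := by
  rw [lay_le_iff_rimp]
  exact h.trans ((lay_le_iff_rimp a y (lay a y)).1 le_rfl)

lemma lay_mono {x y x' y' : A} (h : x ≤ y) (h' : x' ≤ y') : lay x x' ≤ lay y y' :=
  (lay_mono_left h x').trans (lay_mono_right y h')

lemma lay_sup_left (x y b : A) : lay (x ⊔ y) b = lay x b ⊔ lay y b := by
  apply le_antisymm
  · rw [lay_le_iff_limp]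
    exact sup_le ((lay_le_iff_limp _ _ _).1 le_sup_left)
      ((lay_le_iff_limp _ _ _).1 le_sup_right)
  · exact sup_le (lay_mono_left le_sup_left b) (lay_mono_left le_sup_right b)

lemma lay_sup_right (a x y : A) : lay a (x ⊔ y) = lay a x ⊔ lay a y := by
  apply le_antisymm
  · rw [lay_le_iff_rimp]
    exact sup_le ((lay_le_iff_rimp _ _ _).1 le_sup_left)
      ((lay_le_iff_rimp _ _ _).1 le_sup_right)
  · exact sup_le (lay_mono_right a le_sup_left) (lay_mono_right a le_sup_right)

lemma lay_bot_left (b : A) : lay (⊥ : A) b = ⊥ :=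
  le_bot_iff.1 ((lay_le_iff_limp _ _ _).2 bot_le)

lemma lay_bot_right (a : A) : lay a (⊥ : A) = ⊥ :=
  le_bot_iff.1 ((lay_le_iff_rimp _ _ _).2 bot_le)

lemma lay_limp_le (a b : A) : lay (limp a b) a ≤ b :=
  (lay_le_iff_limp _ _ _).2 le_rfl

lemma lay_rimp_le (a b : A) : lay a (rimp a b) ≤ b :=
  (lay_le_iff_rimp _ _ _).2 le_rfl

/-- Main Zorn-based prime extension lemma: any filter all of whose members satisfy
a "prime-like" predicate `φ` extends to a prime filter all of whose members satisfy `φ`. -/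
lemma prime_extension (φ : A → Prop)
    (hmono : ∀ ⦃x y : A⦄, x ≤ y → φ x → φ y)
    (hbot : ¬ φ (⊥ : A))
    (hpr : ∀ x y : A, φ (x ⊔ y) → φ x ∨ φ y)
    (F₀ : Set A) (h0ne : F₀.Nonempty)
    (h0up : ∀ ⦃a b : A⦄, a ∈ F₀ → a ≤ b → b ∈ F₀)
    (h0meet : ∀ ⦃a b : A⦄, a ∈ F₀ → b ∈ F₀ → a ⊓ b ∈ F₀)
    (h0φ : ∀ x ∈ F₀, φ x) :
    ∃ G : Set A, IsPrimeFilter G ∧ F₀ ⊆ G ∧ ∀ x ∈ G, φ x := by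
  classical
  set S : Set (Set A) := {G | G.Nonempty ∧ (∀ ⦃a b : A⦄, a ∈ G → a ≤ b → b ∈ G) ∧
    (∀ ⦃a b : A⦄, a ∈ G → b ∈ G → a ⊓ b ∈ G) ∧ F₀ ⊆ G ∧ ∀ x ∈ G, φ x} with hS
  have hchain : ∀ c ⊆ S, IsChain (· ⊆ ·) c → c.Nonempty →
      ∃ ub ∈ S, ∀ s ∈ c, s ⊆ ub := by
    intro c hc hchain ⟨t, ht⟩
    refine ⟨⋃₀ c, ⟨?_, ?_, ?_, ?_, ?_⟩, fun s hs => Set.subset_sUnion_of_mem hs⟩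
    · obtain ⟨x, hx⟩ := (hc ht).1
      exact ⟨x, Set.mem_sUnion.2 ⟨t, ht, hx⟩⟩
    · rintro a b ⟨s, hs, has⟩ hab
      exact ⟨s, hs, (hc hs).2.1 has hab⟩
    · rintro a b ⟨s, hs, has⟩ ⟨s', hs', hbs⟩
      rcases hchain.total hs hs' with h | h
      · exact ⟨s', hs', (hc hs').2.2.1 (h has) hbs⟩
      · exact ⟨s, hs, (hc hs).2.2.1 has (h hbs)⟩
    · exact ((hc ht).2.2.2.1).trans (Set.subset_sUnion_of_mem ht)
    · rintro x ⟨s, hs, hx⟩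
      exact (hc hs).2.2.2.2 x hx
  obtain ⟨M, hFM, hMS, hMmax⟩ := zorn_subset_nonempty S hchain F₀
    ⟨h0ne, h0up, h0meet, subset_refl _, h0φ⟩
  obtain ⟨hMne, hMup, hMmeet, hMF, hMφ⟩ := hMS
  -- key: for g ∉ M there is m ∈ M with ¬ φ (m ⊓ g)
  have key : ∀ g : A, g ∉ M → ∃ m ∈ M, ¬ φ (m ⊓ g) := by
    intro g hg
    by_contra h
    push_neg at h
    set Mg : Set A := {z | ∃ m ∈ M, m ⊓ g ≤ z} with hMg
    have hMsub : M ⊆ Mg := fun m hm => ⟨m, hm, inf_le_left⟩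
    have hMgS : Mg ∈ S := by
      refine ⟨hMne.mono hMsub, ?_, ?_, hMF.trans hMsub, ?_⟩
      · rintro a b ⟨m, hm, hma⟩ hab
        exact ⟨m, hm, hma.trans hab⟩
      · rintro a b ⟨m, hm, hma⟩ ⟨m', hm', hmb⟩
        exact ⟨m ⊓ m', hMmeet hm hm', le_inf
          ((inf_le_inf_right g (inf_le_left.trans le_rfl)).trans hma)
          ((inf_le_inf_right g inf_le_right).trans hmb)⟩
      · rintro x ⟨m, hm, hmx⟩
        exact hmono hmx (h m hm)
    have hMgM : Mg ⊆ M := hMmax hMgS hMsub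
    obtain ⟨m, hm⟩ := hMne
    exact hg (hMgM ⟨m, hm, inf_le_right⟩)
  refine ⟨M, ⟨hMne, hMup, hMmeet, fun hb => hbot (hMφ ⊥ hb), ?_⟩, hMF, hMφ⟩
  intro x y hxy
  by_contra h
  push_neg at h
  obtain ⟨hx, hy⟩ := h
  obtain ⟨m, hm, hmx⟩ := key x hx
  obtain ⟨m', hm', hmy⟩ := key y hy
  have hn : m ⊓ m' ∈ M := hMmeet hm hm'
  have h1 : φ ((m ⊓ m') ⊓ (x ⊔ y)) := hMφ _ (hMmeet hn hxy)
  rw [inf_sup_left] at h1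
  rcases hpr _ _ h1 with h2 | h2
  · exact hmx (hmono (inf_le_inf_right x inf_le_left) h2)
  · exact hmy (hmono (inf_le_inf_right y inf_le_right) h2)

/-- Separate a filter from a principal ideal by a prime filter. -/
lemma prime_separation (F₀ : Set A) (h0ne : F₀.Nonempty)
    (h0up : ∀ ⦃a b : A⦄, a ∈ F₀ → a ≤ b → b ∈ F₀)
    (h0meet : ∀ ⦃a b : A⦄, a ∈ F₀ → b ∈ F₀ → a ⊓ b ∈ F₀)
    (b : A) (hb : ∀ x ∈ F₀, ¬ x ≤ b) :
    ∃ G : Set A, IsPrimeFilter G ∧ F₀ ⊆ G ∧ b ∉ G := by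
  obtain ⟨G, hG, hFG, hφ⟩ := prime_extension (fun x => ¬ x ≤ b)
    (fun x y hxy hx hy => hx (hxy.trans hy))
    (by simp)
    (fun x y h => by
      by_contra hc; beta_reduce at hc ⊢; push_neg at hc
      exact h (sup_le hc.1 hc.2))
    F₀ h0ne h0up h0meet hb
  exact ⟨G, hG, hFG, fun hbG => hφ b hbG le_rfl⟩

/-- The squeeze lemma for `lay`. -/
lemma squeeze_lay (F : PF A) (a b : A) (hab : lay a b ∈ F.val) :
    ∃ G H : PF A, a ∈ G.val ∧ b ∈ H.val ∧ Rpf G H F := by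
  obtain ⟨hFne, hFup, hFmeet, hFbot, hFpr⟩ := F.property
  -- Step A: extend ↑a
  obtain ⟨G, hG, haG, hGφ⟩ := prime_extension (fun x => lay x b ∈ F.val)
    (fun x y hxy hx => hFup hx (lay_mono_left hxy b))
    (by beta_reduce; rw [lay_bot_left]; exact hFbot)
    (fun x y h => by
      have h' : lay (x ⊔ y) b ∈ F.val := h
      rw [lay_sup_left] at h'
      exact hFpr _ _ h')
    (Set.Ici a) ⟨a, le_rfl⟩ (fun x y hx hxy => hx.trans hxy)
    (fun x y hx hy => le_inf hx hy)
    (fun x hx => hFup hab (lay_mono_left hx b))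
  -- Step B: extend ↑b
  obtain ⟨H, hH, hbH, hHφ⟩ := prime_extension (fun y => ∀ x ∈ G, lay x y ∈ F.val)
    (fun y y' hyy' hy x hxG => hFup (hy x hxG) (lay_mono_right x hyy'))
    (by
      intro h
      obtain ⟨x, hx⟩ := hG.1
      have := h x hx
      rw [lay_bot_right] at this
      exact hFbot this)
    (fun y y' h => by
      by_contra hc; beta_reduce at hc ⊢; push_neg at hc
      obtain ⟨⟨x, hxG, hx⟩, ⟨x', hx'G, hx'⟩⟩ := hc
      have hxx' : x ⊓ x' ∈ G := hG.2.2.1 hxG hx'G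
      have h1 : lay (x ⊓ x') (y ⊔ y') ∈ F.val := h _ hxx'
      rw [lay_sup_right] at h1
      rcases hFpr _ _ h1 with h2 | h2
      · exact hx (hFup h2 (lay_mono_left inf_le_left y))
      · exact hx' (hFup h2 (lay_mono_left inf_le_right y')))
    (Set.Ici b) ⟨b, le_rfl⟩ (fun x y hx hxy => hx.trans hxy)
    (fun x y hx hy => le_inf hx hy)
    (fun y hy x hxG => hFup (hGφ x hxG) (lay_mono_right x hy))
  exact ⟨⟨G, hG⟩, ⟨H, hH⟩, haG le_rfl, hbH le_rfl,
    fun x hx y hy => hHφ y hy x hx⟩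

/-- The squeeze lemma for `limp`. -/
lemma squeeze_limp (F H : PF A) (a : A)
    (hH : ∀ x ∈ F.val, ∀ z, a ≤ z → lay x z ∈ H.val) :
    ∃ W G : PF A, F.val ⊆ W.val ∧ a ∈ G.val ∧ Rpf W G H := by
  obtain ⟨hHne, hHup, hHmeet, hHbot, hHpr⟩ := H.property
  obtain ⟨hFne, hFup, hFmeet, hFbot, hFpr⟩ := F.property
  -- Step A: extend F
  obtain ⟨W, hW, hFW, hWφ⟩ := prime_extension (fun x => ∀ z, a ≤ z → lay x z ∈ H.val)
    (fun x y hxy hx z hz => hHup (hx z hz) (lay_mono_left hxy z))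
    (by
      intro h
      have := h a le_rfl
      rw [lay_bot_left] at this
      exact hHbot this)
    (fun x y h => by
      by_contra hc; beta_reduce at hc ⊢; push_neg at hc
      obtain ⟨⟨z, hz, hxz⟩, ⟨z', hz', hyz'⟩⟩ := hc
      have hzz' : a ≤ z ⊓ z' := le_inf hz hz'
      have h1 : lay (x ⊔ y) (z ⊓ z') ∈ H.val := h _ hzz'
      rw [lay_sup_left] at h1
      rcases hHpr _ _ h1 with h2 | h2
      · exact hxz (hHup h2 (lay_mono_right x inf_le_left))
      · exact hyz' (hHup h2 (lay_mono_right y inf_le_right)))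
    F.val hFne hFup hFmeet hH
  -- Step B: extend ↑a
  obtain ⟨G, hG, haG, hGφ⟩ := prime_extension (fun z => ∀ x ∈ W, lay x z ∈ H.val)
    (fun z z' hzz' hz x hxW => hHup (hz x hxW) (lay_mono_right x hzz'))
    (by
      intro h
      obtain ⟨x, hx⟩ := hW.1
      have := h x hx
      rw [lay_bot_right] at this
      exact hHbot this)
    (fun z z' h => by
      by_contra hc; beta_reduce at hc ⊢; push_neg at hc
      obtain ⟨⟨x, hxW, hxz⟩, ⟨x', hx'W, hx'z⟩⟩ := hc
      have hxx' : x ⊓ x' ∈ W := hW.2.2.1 hxW hx'W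
      have h1 : lay (x ⊓ x') (z ⊔ z') ∈ H.val := h _ hxx'
      rw [lay_sup_right] at h1
      rcases hHpr _ _ h1 with h2 | h2
      · exact hxz (hHup h2 (lay_mono_left inf_le_left z))
      · exact hx'z (hHup h2 (lay_mono_left inf_le_right z')))
    (Set.Ici a) ⟨a, le_rfl⟩ (fun x y hx hxy => hx.trans hxy)
    (fun x y hx hy => le_inf hx hy)
    (fun z hz x hxW => hWφ x hxW z hz)
  exact ⟨⟨W, hW⟩, ⟨G, hG⟩, hFW, haG le_rfl, fun x hx z hz => hGφ z hz x hx⟩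

/-- The squeeze lemma for `rimp`. -/
lemma squeeze_rimp (F H : PF A) (a : A)
    (hH : ∀ x ∈ F.val, ∀ z, a ≤ z → lay z x ∈ H.val) :
    ∃ W G : PF A, F.val ⊆ W.val ∧ a ∈ G.val ∧ Rpf G W H := by
  obtain ⟨hHne, hHup, hHmeet, hHbot, hHpr⟩ := H.property
  obtain ⟨hFne, hFup, hFmeet, hFbot, hFpr⟩ := F.property
  -- Step A: extend F
  obtain ⟨W, hW, hFW, hWφ⟩ := prime_extension (fun x => ∀ z, a ≤ z → lay z x ∈ H.val)
    (fun x y hxy hx z hz => hHup (hx z hz) (lay_mono_right z hxy))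
    (by
      intro h
      have := h a le_rfl
      rw [lay_bot_right] at this
      exact hHbot this)
    (fun x y h => by
      by_contra hc; beta_reduce at hc ⊢; push_neg at hc
      obtain ⟨⟨z, hz, hxz⟩, ⟨z', hz', hyz'⟩⟩ := hc
      have hzz' : a ≤ z ⊓ z' := le_inf hz hz'
      have h1 : lay (z ⊓ z') (x ⊔ y) ∈ H.val := h _ hzz'
      rw [lay_sup_right] at h1
      rcases hHpr _ _ h1 with h2 | h2
      · exact hxz (hHup h2 (lay_mono_left inf_le_left x))
      · exact hyz' (hHup h2 (lay_mono_left inf_le_right y)))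
    F.val hFne hFup hFmeet hH
  -- Step B: extend ↑a
  obtain ⟨G, hG, haG, hGφ⟩ := prime_extension (fun z => ∀ x ∈ W, lay z x ∈ H.val)
    (fun z z' hzz' hz x hxW => hHup (hz x hxW) (lay_mono_left hzz' x))
    (by
      intro h
      obtain ⟨x, hx⟩ := hW.1
      have := h x hx
      rw [lay_bot_left] at this
      exact hHbot this)
    (fun z z' h => by
      by_contra hc; beta_reduce at hc ⊢; push_neg at hc
      obtain ⟨⟨x, hxW, hxz⟩, ⟨x', hx'W, hx'z⟩⟩ := hc
      have hxx' : x ⊓ x' ∈ W := hW.2.2.1 hxW hx'W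
      have h1 : lay (z ⊔ z') (x ⊓ x') ∈ H.val := h _ hxx'
      rw [lay_sup_left] at h1
      rcases hHpr _ _ h1 with h2 | h2
      · exact hxz (hHup h2 (lay_mono_right z inf_le_left))
      · exact hx'z (hHup h2 (lay_mono_right z' inf_le_right)))
    (Set.Ici a) ⟨a, le_rfl⟩ (fun x y hx hxy => hx.trans hxy)
    (fun x y hx hy => le_inf hx hy)
    (fun z hz x hxW => hWφ x hxW z hz)
  exact ⟨⟨W, hW⟩, ⟨G, hG⟩, hFW, haG le_rfl, fun z hz x hx => hGφ z hz x hx⟩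

end Aux

/-- Representation theorem: every layered Heyting algebra embeds in the
complex algebra of its prime filter frame via `h(a) = {F | a ∈ F}`. -/
theorem representation (A : Type*) [LayeredHeytingAlgebra A] :
    Function.Injective (hrep (A := A)) ∧
    (∀ a : A, UpC (hrep a)) ∧
    hrep (⊤ : A) = (Set.univ : Set (PF A)) ∧
    hrep (⊥ : A) = (∅ : Set (PF A)) ∧
    (∀ a b : A, hrep (a ⊓ b) = hrep a ∩ hrep b) ∧
    (∀ a b : A, hrep (a ⊔ b) = hrep a ∪ hrep b) ∧
    (∀ a b : A, hrep (a ⇨ b) = himpP (hrep a) (hrep b)) ∧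
    (∀ a b : A, hrep (lay a b) = layP (hrep a) (hrep b)) ∧
    (∀ a b : A, hrep (limp a b) = limpP (hrep a) (hrep b)) ∧
    (∀ a b : A, hrep (rimp a b) = rimpP (hrep a) (hrep b)) := by
  have hsep : ∀ a b : A, ¬ a ≤ b → ∃ F : PF A, a ∈ F.val ∧ b ∉ F.val := by
    intro a b hab
    obtain ⟨G, hG, haG, hbG⟩ := prime_separation (Set.Ici a) ⟨a, le_rfl⟩
      (fun x y hx hxy => hx.trans hxy) (fun x y hx hy => le_inf hx hy) b
      (fun x hx hxb => hab (le_trans hx hxb))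
    exact ⟨⟨G, hG⟩, haG le_rfl, hbG⟩
  have hle : ∀ a b : A, hrep (A := A) a ⊆ hrep b → a ≤ b := by
    intro a b h
    by_contra hab
    obtain ⟨F, haF, hbF⟩ := hsep a b hab
    exact hbF (h haF)
  refine ⟨?_, ?_, ?_, ?_, ?_, ?_, ?_, ?_, ?_, ?_⟩
  · -- injectivity
    intro a b h
    exact le_antisymm (hle a b h.le) (hle b a h.ge)
  · -- upward closed
    intro a F G hF hFG
    exact hFG hF
  · -- top
    ext F
    simp only [hrep, Set.mem_setOf_eq, Set.mem_univ, iff_true]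
    obtain ⟨x, hx⟩ := F.property.1
    exact F.property.2.1 hx le_top
  · -- bot
    ext F
    simp only [hrep, Set.mem_setOf_eq, Set.mem_empty_iff_false, iff_false]
    exact F.property.2.2.2.1
  · -- inf
    intro a b
    ext F
    simp only [hrep, Set.mem_setOf_eq, Set.mem_inter_iff]
    exact ⟨fun h => ⟨F.property.2.1 h inf_le_left, F.property.2.1 h inf_le_right⟩,
      fun ⟨h1, h2⟩ => F.property.2.2.1 h1 h2⟩
  · -- sup
    intro a b
    ext F
    simp only [hrep, Set.mem_setOf_eq, Set.mem_union]
    exact ⟨fun h => F.property.2.2.2.2 a b h,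
      fun h => h.elim (fun h => F.property.2.1 h le_sup_left)
        (fun h => F.property.2.1 h le_sup_right)⟩
  · -- himp
    intro a b
    ext F
    simp only [hrep, himpP, Set.mem_setOf_eq]
    constructor
    · intro h G hFG haG
      have h1 : (a ⇨ b) ⊓ a ∈ G.val := G.property.2.2.1 (hFG h) haG
      exact G.property.2.1 h1 (by rw [inf_comm]; exact inf_himp_le)
    · intro h
      by_contra hab
      obtain ⟨f₀, hf₀⟩ := F.property.1
      obtain ⟨G, hG, hFaG, hbG⟩ := prime_separation {z | ∃ f ∈ F.val, f ⊓ a ≤ z}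
        ⟨f₀ ⊓ a, f₀, hf₀, le_rfl⟩
        (fun x y ⟨f, hf, hfx⟩ hxy => ⟨f, hf, hfx.trans hxy⟩)
        (fun x y ⟨f, hf, hfx⟩ ⟨f', hf', hfy⟩ =>
          ⟨f ⊓ f', F.property.2.2.1 hf hf', le_inf
            ((inf_le_inf_right a inf_le_left).trans hfx)
            ((inf_le_inf_right a inf_le_right).trans hfy)⟩)
        b
        (by
          rintro x ⟨f, hf, hfx⟩ hxb
          exact hab (F.property.2.1 hf (le_himp_iff.2 (hfx.trans hxb))))
      have hFG : F.val ⊆ G := fun f hf => hFaG ⟨f, hf, inf_le_left⟩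
      have haG : a ∈ G := hFaG ⟨f₀, hf₀, inf_le_right⟩
      exact hbG (h ⟨G, hG⟩ hFG haG)
  · -- lay
    intro a b
    ext F
    simp only [hrep, layP, Set.mem_setOf_eq]
    constructor
    · intro h
      obtain ⟨G, H, haG, hbH, hR⟩ := squeeze_lay F a b h
      exact ⟨F, G, H, subset_refl _, hR, haG, hbH⟩
    · rintro ⟨W, G, H, hWF, hR, haG, hbH⟩
      exact hWF (hR a haG b hbH)
  · -- limp
    intro a b
    ext F
    simp only [hrep, limpP, Set.mem_setOf_eq]
    constructor
    · intro h W G H hFW hR haG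
      have h1 : lay (limp a b) a ∈ H.val := hR _ (hFW h) a haG
      exact H.property.2.1 h1 (lay_limp_le a b)
    · intro h
      by_contra hab
      obtain ⟨f₀, hf₀⟩ := F.property.1
      obtain ⟨H, hH, hH₀, hbH⟩ := prime_separation
        {y | ∃ x ∈ F.val, ∃ z, a ≤ z ∧ lay x z ≤ y}
        ⟨lay f₀ a, f₀, hf₀, a, le_rfl, le_rfl⟩
        (fun x y ⟨f, hf, z, hz, hfx⟩ hxy => ⟨f, hf, z, hz, hfx.trans hxy⟩)
        (fun x y ⟨f, hf, z, hz, hfx⟩ ⟨f', hf', z', hz', hfy⟩ =>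
          ⟨f ⊓ f', F.property.2.2.1 hf hf', z ⊓ z', le_inf hz hz',
            le_inf ((lay_mono inf_le_left inf_le_left).trans hfx)
              ((lay_mono inf_le_right inf_le_right).trans hfy)⟩)
        b
        (by
          rintro y ⟨x, hx, z, hz, hxz⟩ hyb
          have : lay x a ≤ b := le_trans (lay_mono_right x hz) (hxz.trans hyb)
          exact hab (F.property.2.1 hx ((lay_le_iff_limp x a b).1 this)))
      obtain ⟨W, G, hFW, haG, hR⟩ := squeeze_limp F ⟨H, hH⟩ a
        (fun x hx z hz => hH₀ ⟨x, hx, z, hz, le_rfl⟩)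
      exact hbH (h W G ⟨H, hH⟩ hFW hR haG)
  · -- rimp
    intro a b
    ext F
    simp only [hrep, rimpP, Set.mem_setOf_eq]
    constructor
    · intro h W G H hFW hR haG
      have h1 : lay a (rimp a b) ∈ H.val := hR a haG _ (hFW h)
      exact H.property.2.1 h1 (lay_rimp_le a b)
    · intro h
      by_contra hab
      obtain ⟨f₀, hf₀⟩ := F.property.1
      obtain ⟨H, hH, hH₀, hbH⟩ := prime_separation
        {y | ∃ x ∈ F.val, ∃ z, a ≤ z ∧ lay z x ≤ y}
        ⟨lay a f₀, f₀, hf₀, a, le_rfl, le_rfl⟩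
        (fun x y ⟨f, hf, z, hz, hfx⟩ hxy => ⟨f, hf, z, hz, hfx.trans hxy⟩)
        (fun x y ⟨f, hf, z, hz, hfx⟩ ⟨f', hf', z', hz', hfy⟩ =>
          ⟨f ⊓ f', F.property.2.2.1 hf hf', z ⊓ z', le_inf hz hz',
            le_inf ((lay_mono inf_le_left inf_le_left).trans hfx)
              ((lay_mono inf_le_right inf_le_right).trans hfy)⟩)
        b
        (by
          rintro y ⟨x, hx, z, hz, hxz⟩ hyb
          have : lay a x ≤ b := le_trans (lay_mono_left hz x) (hxz.trans hyb)
          exact hab (F.property.2.1 hx ((lay_le_iff_rimp a x b).1 this)))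
      obtain ⟨W, G, hFW, haG, hR⟩ := squeeze_rimp F ⟨H, hH⟩ a
        (fun x hx z hz => hH₀ ⟨x, hx, z, hz, le_rfl⟩)
      exact hbH (h W G ⟨H, hH⟩ hFW hR haG)
end

section
/- Let C be a finite sublattice of a layered Heyting algebra 𝔸 containing ⊤ and ⊥, and define a →_C b = ⋁_C {c ∈ C | a ∧ c ≤ b}. Then (C, ∧, ∨, →_C, ⊤, ⊥) is a Heyting algebra, and if a, b, a →_𝔸 b ∈ C then a →_𝔸 b = a →_C b. -/
open LayeredHeytingAlgebra

open Classical in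
/-- The candidate Heyting implication on a finite sublattice `C`:
`a →_C b = ⋁_C {c ∈ C | a ⊓ c ≤ b}`. -/
noncomputable def himpC {A : Type*} [LayeredHeytingAlgebra A] {C : Set A}
    (hfin : C.Finite) (a b : A) : A :=
  (hfin.toFinset.filter (fun c => a ⊓ c ≤ b)).sup id

theorem finite_sublattice_heyting {A : Type*} [LayeredHeytingAlgebra A]
    {C : Set A} (hfin : C.Finite)
    (htop : (⊤ : A) ∈ C) (hbot : (⊥ : A) ∈ C)
    (hinf : ∀ a ∈ C, ∀ b ∈ C, a ⊓ b ∈ C) (hsup : ∀ a ∈ C, ∀ b ∈ C, a ⊔ b ∈ C) :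
    ∀ a ∈ C, ∀ b ∈ C,
      himpC hfin a b ∈ C ∧
      (∀ c ∈ C, c ≤ himpC hfin a b ↔ a ⊓ c ≤ b) ∧
      ((a ⇨ b) ∈ C → a ⇨ b = himpC hfin a b) := by

  classical
  intro a _ b _
  have hmem : himpC hfin a b ∈ C := by
    apply Finset.sup_induction
    · exact hbot
    · intro x hx y hy; exact hsup x hx y hy
    · intro x hx
      simp only [Finset.mem_filter, Set.Finite.mem_toFinset] at hx
      exact hx.1
  have hkey : a ⊓ himpC hfin a b ≤ b := by
    rw [inf_comm, ← le_himp_iff]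
    apply Finset.sup_le
    intro x hx
    simp only [Finset.mem_filter, Set.Finite.mem_toFinset] at hx
    simpa [le_himp_iff, inf_comm] using hx.2
  refine ⟨hmem, fun c hc => ⟨fun h => le_trans (inf_le_inf_left a h) hkey, fun h => ?_⟩, fun hC => ?_⟩
  · exact Finset.le_sup (f := id) (by simp [Set.Finite.mem_toFinset, hc, h])
  · apply le_antisymm
    · exact Finset.le_sup (f := id) (by simp [Set.Finite.mem_toFinset, hC, inf_himp_le])
    · rw [le_himp_iff, inf_comm]; exact hkey
end

section
/- Let 𝔸 be a layered Heyting algebra and C a finite bounded distributive sublattice of 𝔸, equipped with a →_C b = ⋁{c ∈ C | a ∧ c ≤ b}. Define λ(a) = ⋀_C{c ∈ C | a ≤ c} and σ(a) = ⋁_C{c ∈ C | c ≤ a}, and set c ▸_C c' = λ(c ▸ c'), c -▸_C c' = σ(c -▸ c'), c ▸-_C c' = σ(c ▸- c'). Then these operations satisfy the residuation law c ▸_C c' ≤ d iff c ≤ c' -▸_C d iff c' ≤ c ▸-_C d, making C a finite layered Heyting algebra. -/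
open LayeredHeytingAlgebra

open Classical in
/-- `λ(a) = ⋀_C {c ∈ C | a ≤ c}`, the least element of `C` above `a`. -/
noncomputable def lamC {A : Type*} [LayeredHeytingAlgebra A] {C : Set A}
    (hfin : C.Finite) (a : A) : A :=
  (hfin.toFinset.filter (fun c => a ≤ c)).inf id

open Classical in
/-- `σ(a) = ⋁_C {c ∈ C | c ≤ a}`, the greatest element of `C` below `a`. -/
noncomputable def sigC {A : Type*} [LayeredHeytingAlgebra A] {C : Set A}
    (hfin : C.Finite) (a : A) : A :=
  (hfin.toFinset.filter (fun c => c ≤ a)).sup id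

/-- `c ▸_C c' = λ(c ▸ c')`. -/
noncomputable def layC {A : Type*} [LayeredHeytingAlgebra A] {C : Set A}
    (hfin : C.Finite) (c c' : A) : A :=
  lamC hfin (lay c c')

/-- `c -▸_C c' = σ(c -▸ c')`. -/
noncomputable def limpC {A : Type*} [LayeredHeytingAlgebra A] {C : Set A}
    (hfin : C.Finite) (c c' : A) : A :=
  sigC hfin (limp c c')

/-- `c ▸-_C c' = σ(c ▸- c')`. -/
noncomputable def rimpC {A : Type*} [LayeredHeytingAlgebra A] {C : Set A}
    (hfin : C.Finite) (c c' : A) : A :=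
  sigC hfin (rimp c c')

/-- The operations `▸_C`, `-▸_C`, `▸-_C` on a finite bounded sublattice `C`
stay in `C` and satisfy the residuation law, making `C` a finite layered
Heyting algebra. -/
theorem finite_sublattice_residuation {A : Type*} [LayeredHeytingAlgebra A]
    {C : Set A} (hfin : C.Finite)
    (htop : (⊤ : A) ∈ C) (hbot : (⊥ : A) ∈ C)
    (hinf : ∀ a ∈ C, ∀ b ∈ C, a ⊓ b ∈ C) (hsup : ∀ a ∈ C, ∀ b ∈ C, a ⊔ b ∈ C) :
    ∀ c ∈ C, ∀ c' ∈ C,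
      layC hfin c c' ∈ C ∧ limpC hfin c c' ∈ C ∧ rimpC hfin c c' ∈ C ∧
      ∀ d ∈ C,
        (layC hfin c c' ≤ d ↔ c ≤ limpC hfin c' d) ∧
        (layC hfin c c' ≤ d ↔ c' ≤ rimpC hfin c d) := by
  classical
  -- basic facts about lamC
  have lam_mem : ∀ a : A, lamC hfin a ∈ C := by
    intro a
    unfold lamC
    have : ∀ s : Finset A, (∀ x ∈ s, x ∈ C) → s.inf id ∈ C := by
      intro s
      induction s using Finset.induction with
      | empty => intro _; simpa using htop
      | @insert x t hx ih =>
        intro h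
        rw [Finset.inf_insert]
        exact hinf _ (h x (Finset.mem_insert_self _ _)) _
          (ih fun y hy => h y (Finset.mem_insert_of_mem hy))
    refine this _ fun x hx => ?_
    simp only [Finset.mem_filter, Set.Finite.mem_toFinset] at hx
    exact hx.1
  have sig_mem : ∀ a : A, sigC hfin a ∈ C := by
    intro a
    unfold sigC
    have : ∀ s : Finset A, (∀ x ∈ s, x ∈ C) → s.sup id ∈ C := by
      intro s
      induction s using Finset.induction with
      | empty => intro _; simpa using hbot
      | @insert x t hx ih =>
        intro h
        rw [Finset.sup_insert]
        exact hsup _ (h x (Finset.mem_insert_self _ _)) _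
          (ih fun y hy => h y (Finset.mem_insert_of_mem hy))
    refine this _ fun x hx => ?_
    simp only [Finset.mem_filter, Set.Finite.mem_toFinset] at hx
    exact hx.1
  have le_lam : ∀ a : A, a ≤ lamC hfin a := by
    intro a
    apply Finset.le_inf
    intro x hx
    simp only [Finset.mem_filter, Set.Finite.mem_toFinset] at hx
    exact hx.2
  have lam_le : ∀ a : A, ∀ d ∈ C, a ≤ d → lamC hfin a ≤ d := by
    intro a d hd had
    refine Finset.inf_le (f := id) ?_
    simp only [Finset.mem_filter, Set.Finite.mem_toFinset]
    exact ⟨hd, had⟩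
  have sig_le : ∀ a : A, sigC hfin a ≤ a := by
    intro a
    apply Finset.sup_le
    intro x hx
    simp only [Finset.mem_filter, Set.Finite.mem_toFinset] at hx
    exact hx.2
  have le_sig : ∀ a : A, ∀ d ∈ C, d ≤ a → d ≤ sigC hfin a := by
    intro a d hd hda
    refine Finset.le_sup (f := id) ?_
    simp only [Finset.mem_filter, Set.Finite.mem_toFinset]
    exact ⟨hd, hda⟩
  intro c hc c' hc'
  refine ⟨lam_mem _, sig_mem _, sig_mem _, ?_⟩
  intro d hd
  constructor
  · constructor
    · intro h
      have : lay c c' ≤ d := le_trans (le_lam _) h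
      exact le_sig _ _ hc ((lay_le_iff_limp c c' d).mp this)
    · intro h
      have : c ≤ limp c' d := le_trans h (sig_le _)
      exact lam_le _ _ hd ((lay_le_iff_limp c c' d).mpr this)
  · constructor
    · intro h
      have : lay c c' ≤ d := le_trans (le_lam _) h
      exact le_sig _ _ hc' ((lay_le_iff_rimp c c' d).mp this)
    · intro h
      have : c' ≤ rimp c d := le_trans h (sig_le _)
      exact lam_le _ _ hd ((lay_le_iff_rimp c c' d).mpr this)
end

section
/- The class of layered Heyting algebras has the finite embeddability property: for any layered Heyting algebra 𝔸 and any finite subset B ⊆ A, there exists a finite layered Heyting algebra ℂ and an injective map g : B → ℂ preserving all layered-Heyting-algebra operations insofar as they are defined within B (i.e., if b₁, …, bₙ ∈ B and f_𝔸(b₁,…,bₙ) ∈ B for an operation f, then g(f_𝔸(b₁,…,bₙ)) = f_ℂ(g(b₁),…,g(bₙ))). -/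
open LayeredHeytingAlgebra

/-- A witness to the finite embeddability property for the finite partial
subalgebra `B` of `A`: a finite layered Heyting algebra `C` together with an
injection `g : B → C` preserving all the operations insofar as they are
defined within `B`. -/
structure FEPWitness (A : Type*) [LayeredHeytingAlgebra A] (B : Set A) where
  C : Type
  [finC : Fintype C]
  [algC : LayeredHeytingAlgebra C]
  g : B → C
  inj : Function.Injective g
  map_top : ∀ h : (⊤ : A) ∈ B, g ⟨⊤, h⟩ = ⊤
  map_bot : ∀ h : (⊥ : A) ∈ B, g ⟨⊥, h⟩ = ⊥
  map_inf : ∀ (b₁ b₂ : B) (h : (b₁ : A) ⊓ b₂ ∈ B), g ⟨b₁ ⊓ b₂, h⟩ = g b₁ ⊓ g b₂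
  map_sup : ∀ (b₁ b₂ : B) (h : (b₁ : A) ⊔ b₂ ∈ B), g ⟨b₁ ⊔ b₂, h⟩ = g b₁ ⊔ g b₂
  map_himp : ∀ (b₁ b₂ : B) (h : (b₁ : A) ⇨ b₂ ∈ B), g ⟨b₁ ⇨ b₂, h⟩ = g b₁ ⇨ g b₂
  map_lay : ∀ (b₁ b₂ : B) (h : lay (b₁ : A) b₂ ∈ B),
    g ⟨lay b₁ b₂, h⟩ = lay (g b₁) (g b₂)
  map_limp : ∀ (b₁ b₂ : B) (h : limp (b₁ : A) b₂ ∈ B),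
    g ⟨limp b₁ b₂, h⟩ = limp (g b₁) (g b₂)
  map_rimp : ∀ (b₁ b₂ : B) (h : rimp (b₁ : A) b₂ ∈ B),
    g ⟨rimp b₁ b₂, h⟩ = rimp (g b₁) (g b₂)

protected abbrev Equiv.layeredHeytingAlgebra {α β : Type*} (e : α ≃ β)
    [LayeredHeytingAlgebra β] : LayeredHeytingAlgebra α where
  toHeytingAlgebra := e.heytingAlgebra
  lay x y := e.symm (lay (e x) (e y))
  limp x y := e.symm (limp (e x) (e y))
  rimp x y := e.symm (rimp (e x) (e y))
  lay_le_iff_limp a b c := by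
    change e (e.symm _) ≤ e c ↔ e a ≤ e (e.symm _)
    simp only [Equiv.apply_symm_apply, lay_le_iff_limp]
  lay_le_iff_rimp a b c := by
    change e (e.symm _) ≤ e c ↔ e b ≤ e (e.symm _)
    simp only [Equiv.apply_symm_apply, lay_le_iff_rimp]

namespace Sublattice

variable {α : Type*} [Lattice α] [BoundedOrder α] (L : Sublattice α) [Finite L] {a z : α}

noncomputable def floor (a : α) : α :=
  ((L : Set α).toFinite.sep (· ≤ a)).toFinset.sup id

noncomputable def ceil (a : α) : α :=
  ((L : Set α).toFinite.sep (a ≤ ·)).toFinset.inf id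

theorem floor_le (a : α) : L.floor a ≤ a :=
  Finset.sup_le fun _ hz => ((Set.Finite.mem_toFinset _).1 hz).2

theorem le_ceil (a : α) : a ≤ L.ceil a :=
  Finset.le_inf fun _ hz => ((Set.Finite.mem_toFinset _).1 hz).2

theorem le_floor_iff (hz : z ∈ L) : z ≤ L.floor a ↔ z ≤ a :=
  ⟨fun h => h.trans (L.floor_le a), fun h =>
    Finset.le_sup (f := id) ((Set.Finite.mem_toFinset _).2 ⟨hz, h⟩)⟩

theorem ceil_le_iff (hz : z ∈ L) : L.ceil a ≤ z ↔ a ≤ z :=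
  ⟨(L.le_ceil a).trans, fun h =>
    Finset.inf_le (f := id) ((Set.Finite.mem_toFinset _).2 ⟨hz, h⟩)⟩

theorem floor_mem (hbot : ⊥ ∈ L) (a : α) : L.floor a ∈ L :=
  L.supClosed.finsetSup_mem ⟨⊥, by simpa using hbot⟩ fun _ hz =>
    ((Set.Finite.mem_toFinset _).1 hz).1

theorem ceil_mem (htop : ⊤ ∈ L) (a : α) : L.ceil a ∈ L :=
  L.infClosed.finsetInf_mem ⟨⊤, by simpa using htop⟩ fun _ hz =>
    ((Set.Finite.mem_toFinset _).1 hz).1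

theorem floor_eq_self (ha : a ∈ L) : L.floor a = a :=
  (L.floor_le a).antisymm ((L.le_floor_iff ha).2 le_rfl)

theorem ceil_eq_self (ha : a ∈ L) : L.ceil a = a :=
  ((L.ceil_le_iff ha).2 le_rfl).antisymm (L.le_ceil a)

end Sublattice

section PartialEmbedding

variable {A : Type*} [LayeredHeytingAlgebra A] (B : Set A)

structure IsPartialEmbedding {C : Type*} [LayeredHeytingAlgebra C] (g : B → C) : Prop where
  inj : Function.Injective g
  map_top : ∀ h : (⊤ : A) ∈ B, g ⟨⊤, h⟩ = ⊤
  map_bot : ∀ h : (⊥ : A) ∈ B, g ⟨⊥, h⟩ = ⊥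
  map_inf : ∀ (b₁ b₂ : B) (h : (b₁ : A) ⊓ b₂ ∈ B), g ⟨b₁ ⊓ b₂, h⟩ = g b₁ ⊓ g b₂
  map_sup : ∀ (b₁ b₂ : B) (h : (b₁ : A) ⊔ b₂ ∈ B), g ⟨b₁ ⊔ b₂, h⟩ = g b₁ ⊔ g b₂
  map_himp : ∀ (b₁ b₂ : B) (h : (b₁ : A) ⇨ b₂ ∈ B), g ⟨b₁ ⇨ b₂, h⟩ = g b₁ ⇨ g b₂
  map_lay : ∀ (b₁ b₂ : B) (h : lay (b₁ : A) b₂ ∈ B),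
    g ⟨lay b₁ b₂, h⟩ = lay (g b₁) (g b₂)
  map_limp : ∀ (b₁ b₂ : B) (h : limp (b₁ : A) b₂ ∈ B),
    g ⟨limp b₁ b₂, h⟩ = limp (g b₁) (g b₂)
  map_rimp : ∀ (b₁ b₂ : B) (h : rimp (b₁ : A) b₂ ∈ B),
    g ⟨rimp b₁ b₂, h⟩ = rimp (g b₁) (g b₂)

variable {B}

theorem IsPartialEmbedding.equiv_comp {C D : Type*} [LayeredHeytingAlgebra C] {g : B → C}
    (hg : IsPartialEmbedding B g) (e : C ≃ D) :
    letI := e.symm.layeredHeytingAlgebra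
    IsPartialEmbedding B (e ∘ g) := by
  let := e.symm.layeredHeytingAlgebra
  have map_op (op : C → C → C) (opD : D → D → D)
      (hop : ∀ u v, opD u v = e (op (e.symm u) (e.symm v))) (x y : C) :
      e (op x y) = opD (e x) (e y) := by
    rw [hop, e.symm_apply_apply, e.symm_apply_apply]
  exact
    { inj := e.injective.comp hg.inj
      map_top := fun h => congrArg e (hg.map_top h)
      map_bot := fun h => congrArg e (hg.map_bot h)
      map_inf := fun _ _ _ => by
        rw [Function.comp_apply, hg.map_inf]; exact map_op _ _ (fun _ _ => rfl) _ _
      map_sup := fun _ _ _ => by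
        rw [Function.comp_apply, hg.map_sup]; exact map_op _ _ (fun _ _ => rfl) _ _
      map_himp := fun _ _ _ => by
        rw [Function.comp_apply, hg.map_himp]; exact map_op _ _ (fun _ _ => rfl) _ _
      map_lay := fun _ _ _ => by
        rw [Function.comp_apply, hg.map_lay]; exact map_op _ _ (fun _ _ => rfl) _ _
      map_limp := fun _ _ _ => by
        rw [Function.comp_apply, hg.map_limp]; exact map_op _ _ (fun _ _ => rfl) _ _
      map_rimp := fun _ _ _ => by
        rw [Function.comp_apply, hg.map_rimp]; exact map_op _ _ (fun _ _ => rfl) _ _ }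

theorem IsPartialEmbedding.nonempty_fepWitness {C : Type} [Finite C] [LayeredHeytingAlgebra C]
    {g : B → C} (hg : IsPartialEmbedding B g) : Nonempty (FEPWitness A B) :=
  ⟨{ hg with C, g, finC := Fintype.ofFinite C }⟩

end PartialEmbedding

namespace Sublattice

variable {A : Type*} [LayeredHeytingAlgebra A] (L : Sublattice A) [Finite L]
  (htop : ⊤ ∈ L) (hbot : ⊥ ∈ L)

protected noncomputable abbrev layeredHeytingAlgebra : LayeredHeytingAlgebra L where
  toLattice := inferInstance
  __ := Subtype.boundedOrder hbot htop
  himp x y := ⟨L.floor (x ⇨ y), L.floor_mem hbot _⟩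
  compl x := ⟨L.floor (x ⇨ ⊥), L.floor_mem hbot _⟩
  le_himp_iff x _ _ := (L.le_floor_iff x.2).trans le_himp_iff
  himp_bot _ := rfl
  lay x y := ⟨L.ceil (lay x y), L.ceil_mem htop _⟩
  limp x y := ⟨L.floor (limp x y), L.floor_mem hbot _⟩
  rimp x y := ⟨L.floor (rimp x y), L.floor_mem hbot _⟩
  lay_le_iff_limp x _ z :=
    (L.ceil_le_iff z.2).trans <| (lay_le_iff_limp _ _ _).trans (L.le_floor_iff x.2).symm
  lay_le_iff_rimp _ y z :=
    (L.ceil_le_iff z.2).trans <| (lay_le_iff_rimp _ _ _).trans (L.le_floor_iff y.2).symm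

theorem isPartialEmbedding_inclusion {B : Set A} (hBL : B ⊆ L) :
    letI := L.layeredHeytingAlgebra htop hbot
    IsPartialEmbedding B (fun b => (⟨b, hBL b.2⟩ : L)) := by
  let := L.layeredHeytingAlgebra htop hbot
  exact
    { inj := fun _ _ h => Subtype.ext (Subtype.mk.inj h)
      map_top := fun _ => rfl
      map_bot := fun _ => rfl
      map_inf := fun _ _ _ => rfl
      map_sup := fun _ _ _ => rfl
      map_himp := fun _ _ h => Subtype.ext (L.floor_eq_self (hBL h)).symm
      map_lay := fun _ _ h => Subtype.ext (L.ceil_eq_self (hBL h)).symm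
      map_limp := fun _ _ h => Subtype.ext (L.floor_eq_self (hBL h)).symm
      map_rimp := fun _ _ h => Subtype.ext (L.floor_eq_self (hBL h)).symm }

end Sublattice

/-- The class of layered Heyting algebras has the finite embeddability
property. -/
theorem layeredHeyting_fep (A : Type*) [LayeredHeytingAlgebra A]
    (B : Set A) (hB : B.Finite) : Nonempty (FEPWitness A B) := by
  let S : Set A := insert ⊤ (insert ⊥ B)
  let L : Sublattice A := .ofIsSublattice (latticeClosure S) isSublattice_latticeClosure
  have : Finite L := ((hB.insert ⊥).insert ⊤).latticeClosure.to_subtype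
  have hSL : S ⊆ L := subset_latticeClosure
  have htop : ⊤ ∈ L := hSL (.inl rfl)
  have hbot : ⊥ ∈ L := hSL (.inr (.inl rfl))
  let := L.layeredHeytingAlgebra htop hbot
  -- `FEPWitness` needs a carrier in `Type`, while `L` lives in the universe of `A`.
  let := (Finite.equivFin L).symm.layeredHeytingAlgebra
  have hBL : B ⊆ L := fun _ hb => hSL (.inr (.inr hb))
  exact ((L.isPartialEmbedding_inclusion htop hbot hBL).equiv_comp
    (Finite.equivFin L)).nonempty_fepWitness
end

section
/- Given an intuitionistic layered p-morphism f : X → X' between intuitionistic layered frames, the inverse image map f⁻¹ on upward-closed sets preserves the operation -▸: f⁻¹(C₁ -▸_{R'} C₂) = f⁻¹(C₁) -▸_R f⁻¹(C₂) for all upward-closed C₁, C₂ ⊆ X'. -/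
theorem pmorphism_preimage_limp {X X' : Type*} [Preorder X] [Preorder X']
    (R : X → X → X → Prop) (R' : X' → X' → X' → Prop) (f : X → X')
    (h1 : Monotone f)
    (h2 : ∀ x y', f x ≤ y' → ∃ y, x ≤ y ∧ f y = y')
    (h3 : ∀ x y z, R x y z → R' (f x) (f y) (f z))
    (h4 : ∀ x w' y' z', w' ≤ f x → R' y' z' w' →
      ∃ w y z, w ≤ x ∧ R y z w ∧ y' ≤ f y ∧ z' ≤ f z)
    (h5 : ∀ x w' y' z', f x ≤ w' → R' w' y' z' →
      ∃ w y z, x ≤ w ∧ R w y z ∧ y' ≤ f y ∧ f z ≤ z')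
    (h6 : ∀ x w' y' z', f x ≤ w' → R' y' w' z' →
      ∃ w y z, x ≤ w ∧ R y w z ∧ y' ≤ f y ∧ f z ≤ z')
    (C₁ C₂ : Set X') (hC₁ : UpClosed C₁) (hC₂ : UpClosed C₂) :
    f ⁻¹' (limpR R' C₁ C₂) = limpR R (f ⁻¹' C₁) (f ⁻¹' C₂) := by
  ext x
  constructor
  · intro hx w y z hxw hR hy
    exact hx (f w) (f y) (f z) (h1 hxw) (h3 _ _ _ hR) hy
  · intro hx w' y' z' hxw hR' hy'
    obtain ⟨w, y, z, hxw2, hR, hy2, hz2⟩ := h5 x w' y' z' hxw hR'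
    exact hC₂ (hx w y z hxw2 hR (hC₁ hy' hy2)) hz2
end
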